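/- arXiv:1904.07462 — 4 statements merged into one kernel-verified Lean document; each statement's English description precedes it below -/
import Mathlib

section
/- There exists a unique vector s* ∈ ℝ^d such that Dᵀα* = s* for every α* ∈ Ω*; moreover, for any α ∈ ℝ^m one has α ∈ Ω* if and only if Dᵀα = s* and α ∈ B∞(λ). -/
open scoped RealInnerProductSpace
open Matrix

/-- The ℓ∞-ball of radius `lam` in `ℝ^m`. -/
def BinfBall (m : ℕ) (lam : ℝ) : Set (EuclideanSpace ℝ (Fin m)) :=
  {a | ∀ i, |a i| ≤ lam}

/-! The convex conjugate of a function with `ℓ`-Lipschitz gradient is `ℓ⁻¹`-strongly convex: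
testing the supremum defining `f* x` at the gradient step `β + ℓ⁻¹ • (x - ∇f β)` and applying
the descent lemma gives `f* x ≥ ⟪x, β⟫ - f β + ‖x - ∇f β‖² / (2ℓ)`, and averaging these bounds
at `x` and `y` for the same `β` gives the strong convexity inequality. So `f̄ = f* ∘ Dᵀ` is
continuous and attains its minimum on the compact convex box `B∞(λ)`, and two minimizers with
different images under `Dᵀ` would have a midpoint with strictly smaller value. Conversely, a point
of the box with the same image as a minimizer has the same value. -/

open Set

theorem mul_mul_norm_sub_sq_le {E : Type*} [NormedAddCommGroup E] [InnerProductSpace ℝ E]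
    {a b : ℝ} (ha : 0 ≤ a) (hb : 0 ≤ b) (hab : a + b = 1) (u v : E) :
    a * b * ‖u - v‖ ^ 2 ≤ a * ‖u‖ ^ 2 + b * ‖v‖ ^ 2 := by
  have h := sq_nonneg ‖a • u + b • v‖
  rw [norm_add_sq_real, norm_smul, norm_smul, real_inner_smul_left, real_inner_smul_right,
    Real.norm_of_nonneg ha, Real.norm_of_nonneg hb] at h
  rw [norm_sub_sq_real]
  obtain rfl := eq_sub_of_add_eq hab
  nlinarith

section Smooth

variable {E : Type*} [NormedAddCommGroup E] [InnerProductSpace ℝ E] [CompleteSpace E]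
  {f : E → ℝ} {f' : E → E} {ℓ : ℝ}

theorem le_add_inner_add_sq_of_lipschitz_gradient (hgrad : ∀ x, HasGradientAt f (f' x) x)
    (hlip : ∀ x y, ‖f' x - f' y‖ ≤ ℓ * ‖x - y‖) (x y : E) :
    f y ≤ f x + ⟪f' x, y - x⟫ + ℓ / 2 * ‖y - x‖ ^ 2 := by
  set v := y - x
  let g : ℝ → ℝ := fun t ↦ f (x + t • v) - t * ⟪f' x, v⟫ - ℓ / 2 * t ^ 2 * ‖v‖ ^ 2
  have hg : ∀ t : ℝ, HasDerivAt g (⟪f' (x + t • v) - f' x, v⟫ - ℓ * t * ‖v‖ ^ 2) t := by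
    intro t
    have hline : HasDerivAt (fun t : ℝ ↦ x + t • v) v t := by
      simpa using ((hasDerivAt_id t).smul_const v).const_add x
    have hf := (hgrad (x + t • v)).hasFDerivAt.comp_hasDerivAt t hline
    have hq := ((hasDerivAt_pow 2 t).const_mul (ℓ / 2)).mul_const (‖v‖ ^ 2)
    refine ((hf.sub (hasDerivAt_mul_const ⟪f' x, v⟫)).sub hq).congr_deriv ?_
    simp only [InnerProductSpace.toDual_apply_apply, inner_sub_left]
    ring
  have hslope : ∀ t ∈ interior (Icc (0 : ℝ) 1),
      ⟪f' (x + t • v) - f' x, v⟫ - ℓ * t * ‖v‖ ^ 2 ≤ 0 := by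
    intro t ht
    rw [interior_Icc] at ht
    have hstep : ‖x + t • v - x‖ = t * ‖v‖ := by
      rw [add_sub_cancel_left, norm_smul, Real.norm_of_nonneg ht.1.le]
    rw [sub_nonpos]
    calc ⟪f' (x + t • v) - f' x, v⟫ ≤ ‖f' (x + t • v) - f' x‖ * ‖v‖ := real_inner_le_norm _ _
      _ ≤ ℓ * (t * ‖v‖) * ‖v‖ := by
        rw [← hstep]; exact mul_le_mul_of_nonneg_right (hlip _ _) (norm_nonneg v)
      _ = ℓ * t * ‖v‖ ^ 2 := by ring
  have hanti : AntitoneOn g (Icc 0 1) :=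
    antitoneOn_of_hasDerivWithinAt_nonpos (convex_Icc 0 1)
      (fun t _ ↦ (hg t).continuousAt.continuousWithinAt)
      (fun t _ ↦ (hg t).hasDerivWithinAt) hslope
  have h01 := hanti (left_mem_Icc.2 zero_le_one) (right_mem_Icc.2 zero_le_one) zero_le_one
  simp only [g, one_smul, zero_smul, add_zero, v, add_sub_cancel] at h01
  linarith

variable {fstar : E → ℝ}

theorem inner_sub_add_sq_le_conjugate (hℓ : 0 < ℓ) (hgrad : ∀ x, HasGradientAt f (f' x) x)
    (hlip : ∀ x y, ‖f' x - f' y‖ ≤ ℓ * ‖x - y‖)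
    (hfstar : ∀ x, IsLUB (range fun β ↦ ⟪x, β⟫ - f β) (fstar x)) (x β : E) :
    ⟪x, β⟫ - f β + 1 / (2 * ℓ) * ‖x - f' β‖ ^ 2 ≤ fstar x := by
  set u := x - f' β
  have hsup : ⟪x, β + ℓ⁻¹ • u⟫ - f (β + ℓ⁻¹ • u) ≤ fstar x := (hfstar x).1 ⟨_, rfl⟩
  have hdescent := le_add_inner_add_sq_of_lipschitz_gradient hgrad hlip β (β + ℓ⁻¹ • u)
  have hu : ⟪x, u⟫ - ⟪f' β, u⟫ = ‖u‖ ^ 2 := by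
    rw [← inner_sub_left, real_inner_self_eq_norm_sq]
  rw [add_sub_cancel_left, norm_smul, Real.norm_of_nonneg (inv_nonneg.2 hℓ.le),
    real_inner_smul_right] at hdescent
  rw [inner_add_right, real_inner_smul_right] at hsup
  have hcoef : 1 / (2 * ℓ) = ℓ⁻¹ - ℓ / 2 * ℓ⁻¹ ^ 2 := by field_simp; ring
  rw [hcoef]
  linear_combination hsup + hdescent - ℓ⁻¹ * hu

theorem strongConvexOn_conjugate_of_lipschitz_gradient (hℓ : 0 < ℓ) (hgrad : ∀ x, HasGradientAt f (f' x) x)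
    (hlip : ∀ x y, ‖f' x - f' y‖ ≤ ℓ * ‖x - y‖)
    (hfstar : ∀ x, IsLUB (range fun β ↦ ⟪x, β⟫ - f β) (fstar x)) :
    StrongConvexOn univ ℓ⁻¹ fstar := by
  refine ⟨convex_univ, fun x _ y _ a b ha hb hab ↦ (hfstar _).2 ?_⟩
  rintro _ ⟨β, rfl⟩
  have hx := inner_sub_add_sq_le_conjugate hℓ hgrad hlip hfstar x β
  have hy := inner_sub_add_sq_le_conjugate hℓ hgrad hlip hfstar y β
  have hmix := mul_mul_norm_sub_sq_le ha hb hab (x - f' β) (y - f' β)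
  rw [sub_sub_sub_cancel_right] at hmix
  simp only [inner_add_left, real_inner_smul_left, smul_eq_mul]
  have hcoef : ℓ⁻¹ / 2 = 1 / (2 * ℓ) := by field_simp
  rw [hcoef]
  linear_combination a * hx + b * hy + 1 / (2 * ℓ) * hmix + f β * hab

end Smooth

theorem map_eq_of_isMinOn_comp {E F : Type*} [AddCommGroup F] [Module ℝ F] {g : F → ℝ}
    {T : E → F} {K : Set E} (hg : StrictConvexOn ℝ (T '' K) g) {a b : E}
    (ha : IsMinOn (g ∘ T) K a) (hb : IsMinOn (g ∘ T) K b) (haK : a ∈ K) (hbK : b ∈ K) :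
    T a = T b := by
  have hmin : ∀ {c}, IsMinOn (g ∘ T) K c → IsMinOn g (T '' K) (T c) := by
    rintro c hc _ ⟨x, hx, rfl⟩
    exact hc hx
  exact hg.eq_of_isMinOn (hmin ha) (hmin hb) (mem_image_of_mem T haK) (mem_image_of_mem T hbK)

theorem mem_and_isMinOn_comp_iff_map_eq {E F : Type*} [AddCommGroup F] [Module ℝ F]
    {g : F → ℝ} {T : E → F} {K : Set E} (hg : StrictConvexOn ℝ (T '' K) g) {a₀ : E}
    (ha₀ : IsMinOn (g ∘ T) K a₀) (ha₀K : a₀ ∈ K) (a : E) :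
    a ∈ K ∧ IsMinOn (g ∘ T) K a ↔ T a = T a₀ ∧ a ∈ K := by
  refine ⟨fun ⟨haK, ha⟩ ↦ ⟨map_eq_of_isMinOn_comp hg ha ha₀ haK ha₀K, haK⟩,
    fun ⟨hTa, haK⟩ ↦ ⟨haK, fun c hc ↦ ?_⟩⟩
  simpa [Function.comp_apply, hTa] using ha₀ hc

theorem isCompact_binfBall (m : ℕ) (lam : ℝ) : IsCompact (BinfBall m lam) := by
  have hpi : BinfBall m lam = (EuclideanSpace.equiv (Fin m) ℝ).toHomeomorph ⁻¹'
      univ.pi fun _ ↦ Icc (-lam) lam := by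
    ext a
    simp only [BinfBall, mem_preimage, mem_univ_pi, mem_Icc, abs_le]
    rfl
  rw [hpi, Homeomorph.isCompact_preimage]
  exact isCompact_univ_pi fun _ ↦ isCompact_Icc

theorem convex_binfBall (m : ℕ) (lam : ℝ) : Convex ℝ (BinfBall m lam) := by
  intro a ha b hb s t hs ht hst i
  simp only [PiLp.add_apply, PiLp.smul_apply, smul_eq_mul]
  calc |s * a i + t * b i| ≤ s * |a i| + t * |b i| := by
        simpa [abs_mul, abs_of_nonneg hs, abs_of_nonneg ht] using abs_add_le (s * a i) (t * b i)
    _ ≤ s * lam + t * lam := by gcongr; exacts [ha i, hb i]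
    _ = lam := by rw [← add_mul, hst, one_mul]

theorem zero_mem_binfBall (m : ℕ) {lam : ℝ} (hlam : 0 ≤ lam) : 0 ∈ BinfBall m lam := by
  simp [BinfBall, hlam]

theorem dual_optimal_set_characterization_general
    (d m : ℕ)
    (f : EuclideanSpace ℝ (Fin d) → ℝ)
    (f' : EuclideanSpace ℝ (Fin d) → EuclideanSpace ℝ (Fin d))
    (μ ℓ : ℝ) (hμ : 0 < μ) (hμℓ : μ ≤ ℓ)
    (hgrad : ∀ x, HasGradientAt f (f' x) x)
    (hlip : ∀ β₁ β₂ : EuclideanSpace ℝ (Fin d),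
      ‖f' β₁ - f' β₂‖ ≤ ℓ * ‖β₁ - β₂‖)
    (D : Matrix (Fin m) (Fin d) ℝ) (lam : ℝ) (hlam : 0 < lam)
    (fstar : EuclideanSpace ℝ (Fin d) → ℝ)
    (hfstar : ∀ x, IsLUB (Set.range fun β => ⟪x, β⟫ - f β) (fstar x))
    (fbar : EuclideanSpace ℝ (Fin m) → ℝ)
    (hfbar : ∀ a, fbar a = fstar (Matrix.toEuclideanLin (𝕜 := ℝ) Dᵀ a))
    (Ω : Set (EuclideanSpace ℝ (Fin m)))
    (hΩ : Ω = {a | a ∈ BinfBall m lam ∧ ∀ a' ∈ BinfBall m lam, fbar a ≤ fbar a'}) :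
    ∃! s : EuclideanSpace ℝ (Fin d),
      (∀ a ∈ Ω, Matrix.toEuclideanLin (𝕜 := ℝ) Dᵀ a = s) ∧
      (∀ a, a ∈ Ω ↔ (Matrix.toEuclideanLin (𝕜 := ℝ) Dᵀ a = s ∧ a ∈ BinfBall m lam)) := by
  set T := Matrix.toEuclideanLin (𝕜 := ℝ) Dᵀ
  set B := BinfBall m lam
  obtain rfl : fbar = fstar ∘ T := funext hfbar
  subst hΩ
  have hℓ : 0 < ℓ := hμ.trans_le hμℓ
  have hstrict : StrictConvexOn ℝ univ fstar :=
    (strongConvexOn_conjugate_of_lipschitz_gradient hℓ hgrad hlip hfstar).strictConvexOn (inv_pos.2 hℓ)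
  have hcont : ContinuousOn (fstar ∘ T) B :=
    ((hstrict.convexOn.continuousOn isOpen_univ).comp_continuous
      T.continuous_of_finiteDimensional mem_univ).continuousOn
  obtain ⟨a₀, ha₀B, ha₀⟩ :=
    (isCompact_binfBall m lam).exists_isMinOn ⟨0, zero_mem_binfBall m hlam.le⟩ hcont
  have hmem : ∀ a, a ∈ B ∧ IsMinOn (fstar ∘ T) B a ↔ T a = T a₀ ∧ a ∈ B :=
    mem_and_isMinOn_comp_iff_map_eq
      (hstrict.subset (subset_univ _) ((convex_binfBall m lam).linear_image T)) ha₀ ha₀B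
  refine ⟨T a₀, ⟨fun a ha ↦ ((hmem a).1 ha).1, hmem⟩, fun s hs ↦ ?_⟩
  exact (hs.1 a₀ ((hmem a₀).2 ⟨rfl, ha₀B⟩)).symm

/-- There exists a unique vector `s* ∈ ℝ^d` such that `Dᵀα* = s*` for every
`α*` in the optimal set `Ω* = argmin_{α ∈ B∞(λ)} f̄(α)` of the dual problem, and moreover
membership in `Ω*` is characterized by `Dᵀα = s*` together with `α ∈ B∞(λ)`. -/
theorem dual_optimal_set_characterization
    (d m : ℕ) (hd : 0 < d) (hm : 0 < m)
    (f : EuclideanSpace ℝ (Fin d) → ℝ)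
    (f' : EuclideanSpace ℝ (Fin d) → EuclideanSpace ℝ (Fin d))
    (μ ℓ : ℝ) (hμ : 0 < μ) (hμℓ : μ ≤ ℓ)
    (hconv : ConvexOn ℝ Set.univ f)
    (hgrad : ∀ x, HasGradientAt f (f' x) x)
    (hsc : ∀ β₁ β₂ : EuclideanSpace ℝ (Fin d),
      μ * ‖β₁ - β₂‖ ^ 2 ≤ ⟪f' β₁ - f' β₂, β₁ - β₂⟫)
    (hlip : ∀ β₁ β₂ : EuclideanSpace ℝ (Fin d),
      ‖f' β₁ - f' β₂‖ ≤ ℓ * ‖β₁ - β₂‖)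
    (D : Matrix (Fin m) (Fin d) ℝ) (lam : ℝ) (hlam : 0 < lam)
    (fstar : EuclideanSpace ℝ (Fin d) → ℝ)
    (hfstar : ∀ x, IsLUB (Set.range fun β => ⟪x, β⟫ - f β) (fstar x))
    (fbar : EuclideanSpace ℝ (Fin m) → ℝ)
    (hfbar : ∀ a, fbar a = fstar (Matrix.toEuclideanLin (𝕜 := ℝ) Dᵀ a))
    (Ω : Set (EuclideanSpace ℝ (Fin m)))
    (hΩ : Ω = {a | a ∈ BinfBall m lam ∧ ∀ a' ∈ BinfBall m lam, fbar a ≤ fbar a'}) :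
    ∃! s : EuclideanSpace ℝ (Fin d),
      (∀ a ∈ Ω, Matrix.toEuclideanLin (𝕜 := ℝ) Dᵀ a = s) ∧
      (∀ a, a ∈ Ω ↔ (Matrix.toEuclideanLin (𝕜 := ℝ) Dᵀ a = s ∧ a ∈ BinfBall m lam)) :=
  dual_optimal_set_characterization_general d m f f' μ ℓ hμ hμℓ hgrad hlip D lam hlam fstar hfstar
    fbar hfbar Ω hΩ
end

section
/- There exists a constant θ > 0, depending only on A and E, such that for every x ∈ ℝ^n there is a point x* ∈ P with ‖x − x*‖ ≤ θ · ‖( max(Ax − z, 0), Ex − s )‖, where max(·,0) is taken componentwise and the norm is the Euclidean norm of the concatenated residual vector in ℝ^{p+q}. In particular dist(x, P) ≤ θ‖( max(Ax − z, 0), Ex − s )‖ for all x ∈ ℝ^n (Hoffman's bound). -/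
/-!
Project `x` onto the polyhedron `{y | ∀ k, ⟪g k, y⟫ ≤ b k}`, getting `x*`. The optimality
condition of the projection, combined with Farkas' lemma for the (closed) cone spanned by the
active normals, puts `x - x*` in that cone; by the conic Carathéodory theorem
`x - x* = ∑_{k ∈ T} m_k g_k` with `m ≥ 0` and `(g_k)_{k ∈ T}` linearly independent. For active `k`,
`⟪g_k, x - x*⟫ = ⟪g_k, x⟫ - b_k` is at most the residual `r_k`, so
`‖x - x*‖² = ∑ m_k ⟪g_k, x - x*⟫ ≤ ‖m‖ ‖r‖ ≤ C ‖x - x*‖ ‖r‖`, where `‖m‖ ≤ C ‖∑ m_k g_k‖` holds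
with one constant `C` for all of the finitely many linearly independent subfamilies. Equations
are split into pairs of opposite inequalities, whose squared residuals add up to the squared
defect.
-/

open RealInnerProductSpace Filter Topology

section ConicHull

variable (𝕜 : Type*) {V ι : Type*} [Field 𝕜] [LinearOrder 𝕜] [AddCommGroup V] [Module 𝕜 V]

def conicHull (g : ι → V) (S : Finset ι) : Set V :=
  {v | ∃ m : ι → 𝕜, (∀ k ∈ S, 0 ≤ m k) ∧ ∑ k ∈ S, m k • g k = v}

variable {𝕜}

theorem conicHull_mono [DecidableEq ι] {g : ι → V} {S T : Finset ι} (hTS : T ⊆ S) :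
    conicHull 𝕜 g T ⊆ conicHull 𝕜 g S := by
  rintro _ ⟨m, hm, rfl⟩
  refine ⟨fun k => if k ∈ T then m k else 0, fun k _ => ?_, ?_⟩
  · dsimp only
    split_ifs with hk
    exacts [hm k hk, le_rfl]
  · simp only [ite_smul, zero_smul, Finset.sum_ite_mem, Finset.inter_eq_right.mpr hTS]

theorem conicHull_eq_image_linearCombination (g : ι → V) (T : Finset ι) :
    conicHull 𝕜 g T = Fintype.linearCombination 𝕜 (fun k : T => g k) '' Set.Ici 0 := by
  ext v
  simp only [Fintype.linearCombination_apply, Set.mem_image, Set.mem_Ici]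
  constructor
  · rintro ⟨m, hm, rfl⟩
    exact ⟨fun k => m k, fun k => hm k k.2, Finset.sum_coe_sort T fun k => m k • g k⟩
  · rintro ⟨μ, hμ, rfl⟩
    classical
    refine ⟨fun k => if h : k ∈ T then μ ⟨k, h⟩ else 0, fun k hk => by simpa [hk] using hμ ⟨k, hk⟩,
      ?_⟩
    rw [← Finset.sum_coe_sort T]
    simp

variable [IsStrictOrderedRing 𝕜]

/-- Moving along a linear relation `β` until the first coefficient vanishes. -/
theorem exists_sum_smul_mem_conicHull_erase [DecidableEq ι] {g : ι → V} {S : Finset ι}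
    {l β : ι → 𝕜} (hl : ∀ k ∈ S, 0 ≤ l k) (hβ : ∑ k ∈ S, β k • g k = 0)
    (hpos : ∃ k ∈ S, 0 < β k) :
    ∃ k₀ ∈ S, ∑ k ∈ S, l k • g k ∈ conicHull 𝕜 g (S.erase k₀) := by
  obtain ⟨k₀, hk₀, hmin⟩ := Finset.exists_min_image (S.filter (0 < β ·)) (fun k => l k / β k)
    (by simpa [Finset.filter_nonempty_iff] using hpos)
  obtain ⟨hk₀S, hβk₀⟩ := Finset.mem_filter.mp hk₀
  set t := l k₀ / β k₀
  have ht : 0 ≤ t := div_nonneg (hl k₀ hk₀S) hβk₀.le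
  refine ⟨k₀, hk₀S, fun k => l k - t * β k, fun k hk => ?_, ?_⟩
  · have hkS := Finset.mem_of_mem_erase hk
    rcases lt_or_ge 0 (β k) with hβk | hβk
    · have := hmin k (Finset.mem_filter.mpr ⟨hkS, hβk⟩)
      rw [le_div_iff₀ hβk] at this
      linarith
    · nlinarith [hl k hkS]
  · have hk₀ : (l k₀ - t * β k₀) • g k₀ = 0 := by
      rw [div_mul_cancel₀ _ hβk₀.ne', sub_self, zero_smul]
    rw [Finset.sum_erase S hk₀]
    simp only [sub_smul, Finset.sum_sub_distrib, mul_smul, ← Finset.smul_sum, hβ, smul_zero,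
      sub_zero]

/-- Conic Carathéodory theorem. -/
theorem exists_linearIndepOn_of_mem_conicHull [DecidableEq ι] {g : ι → V} {S : Finset ι}
    {v : V} (hv : v ∈ conicHull 𝕜 g S) :
    ∃ T ⊆ S, LinearIndepOn 𝕜 g (T : Set ι) ∧ v ∈ conicHull 𝕜 g T := by
  induction S using Finset.strongInduction generalizing v with
  | H S ih =>
    by_cases hS : LinearIndepOn 𝕜 g (S : Set ι)
    · exact ⟨S, subset_rfl, hS, hv⟩
    obtain ⟨l, hl, rfl⟩ := hv
    obtain ⟨β, hβ, i, hi, hβi⟩ := not_linearIndepOn_finset_iff.mp hS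
    obtain ⟨k₀, hk₀, hmem⟩ : ∃ k₀ ∈ S, ∑ k ∈ S, l k • g k ∈ conicHull 𝕜 g (S.erase k₀) := by
      rcases hβi.lt_or_gt with hneg | hpos
      · refine exists_sum_smul_mem_conicHull_erase hl (β := -β) ?_ ⟨i, hi, by simpa⟩
        simp [neg_smul, hβ]
      · exact exists_sum_smul_mem_conicHull_erase hl hβ ⟨i, hi, hpos⟩
    obtain ⟨T, hT, hTind, hvT⟩ := ih _ (Finset.erase_ssubset hk₀) hmem
    exact ⟨T, hT.trans (Finset.erase_subset _ _), hTind, hvT⟩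

end ConicHull

section Closed

variable {V ι : Type*} [AddCommGroup V] [Module ℝ V] [TopologicalSpace V]
  [IsTopologicalAddGroup V] [ContinuousSMul ℝ V] [T2Space V] {g : ι → V}

theorem isClosed_conicHull_of_linearIndepOn {T : Finset ι} (hT : LinearIndepOn ℝ g (T : Set ι)) :
    IsClosed (conicHull ℝ g T) := by
  rw [conicHull_eq_image_linearCombination]
  have hinj := (linearIndependent_iff_injective_fintypeLinearCombination.mp hT)
  exact (LinearMap.isClosedEmbedding_of_injective (LinearMap.ker_eq_bot.mpr hinj)).isClosedMap _
    isClosed_Ici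

theorem isClosed_conicHull [DecidableEq ι] (S : Finset ι) : IsClosed (conicHull ℝ g S) := by
  have : conicHull ℝ g S =
      ⋃ T ∈ {T : Finset ι | T ⊆ S ∧ LinearIndepOn ℝ g (T : Set ι)}, conicHull ℝ g T := by
    refine subset_antisymm (fun v hv => ?_) (Set.iUnion₂_subset fun T hT => conicHull_mono hT.1)
    obtain ⟨T, hTS, hT, hvT⟩ := exists_linearIndepOn_of_mem_conicHull hv
    exact Set.mem_biUnion ⟨hTS, hT⟩ hvT
  rw [this]
  exact (S.powerset.finite_toSet.subset fun T hT => by simpa using hT.1).isClosed_biUnion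
    fun T hT => isClosed_conicHull_of_linearIndepOn hT.2

end Closed

section InnerProduct

variable {V ι : Type*} [NormedAddCommGroup V] [InnerProductSpace ℝ V]

/-- Farkas' lemma for a finitely generated cone; separation works because the cone is closed. -/
theorem exists_inner_pos_of_notMem_conicHull [CompleteSpace V] [DecidableEq ι] {g : ι → V}
    {S : Finset ι} {v : V} (hv : v ∉ conicHull ℝ g S) :
    ∃ d, (∀ k ∈ S, ⟪g k, d⟫ ≤ 0) ∧ 0 < ⟪v, d⟫ := by
  let C : ProperCone ℝ V :=
    { carrier := conicHull ℝ g S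
      add_mem' := by
        rintro _ _ ⟨m, hm, rfl⟩ ⟨m', hm', rfl⟩
        exact ⟨m + m', fun k hk => add_nonneg (hm k hk) (hm' k hk), by
          simp only [Pi.add_apply, add_smul, Finset.sum_add_distrib]⟩
      zero_mem' := ⟨0, fun _ _ => le_rfl, by simp⟩
      smul_mem' := by
        rintro c _ ⟨m, hm, rfl⟩
        exact ⟨(c : ℝ) • m, fun k hk => mul_nonneg c.2 (hm k hk), by
          simp only [Pi.smul_apply, smul_eq_mul, mul_smul, Finset.smul_sum]; rfl⟩
      isClosed' := isClosed_conicHull S }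
  obtain ⟨y, hy, hvy⟩ := C.hyperplane_separation' hv
  refine ⟨-y, fun k hk => ?_, by simpa using hvy⟩
  have hgk : g k ∈ C := ⟨Pi.single k 1, fun j _ => by by_cases j = k <;> simp_all,
    by simp [Pi.single_apply, hk]⟩
  simpa using hy _ hgk

theorem LinearIndependent.exists_sqrt_sum_sq_le {κ : Type*} [Fintype κ] {v : κ → V}
    (hv : LinearIndependent ℝ v) :
    ∃ C > 0, ∀ m : κ → ℝ, √(∑ k, m k ^ 2) ≤ C * ‖∑ k, m k • v k‖ := by
  let L : EuclideanSpace ℝ κ →ₗ[ℝ] V :=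
    (Fintype.linearCombination ℝ v).comp (WithLp.linearEquiv 2 ℝ (κ → ℝ)).toLinearMap
  have hL : Function.Injective L :=
    hv.fintypeLinearCombination_injective.comp (WithLp.linearEquiv 2 ℝ (κ → ℝ)).injective
  obtain ⟨K, hK, hanti⟩ := L.injective_iff_antilipschitz.mp hL
  refine ⟨K, hK, fun m => ?_⟩
  simpa [EuclideanSpace.norm_eq, L, Fintype.linearCombination_apply] using
    ZeroHomClass.bound_of_antilipschitz L hanti (WithLp.toLp 2 m)

theorem LinearIndepOn.exists_sqrt_sum_sq_le {g : ι → V} {T : Finset ι}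
    (hT : LinearIndepOn ℝ g (T : Set ι)) :
    ∃ C > 0, ∀ m : ι → ℝ, √(∑ k ∈ T, m k ^ 2) ≤ C * ‖∑ k ∈ T, m k • g k‖ := by
  obtain ⟨C, hC, hbound⟩ := LinearIndependent.exists_sqrt_sum_sq_le hT
  refine ⟨C, hC, fun m => ?_⟩
  simpa only [Finset.sum_finset_coe (fun k => m k ^ 2), Finset.sum_finset_coe (fun k => m k • g k)]
    using hbound fun k => m k

theorem exists_forall_linearIndepOn_sqrt_sum_sq_le [Finite ι] (g : ι → V) :
    ∃ C > 0, ∀ T : Finset ι, LinearIndepOn ℝ g (T : Set ι) →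
      ∀ m : ι → ℝ, √(∑ k ∈ T, m k ^ 2) ≤ C * ‖∑ k ∈ T, m k • g k‖ := by
  have hlocal : ∀ T : Finset ι, ∃ C > 0, LinearIndepOn ℝ g (T : Set ι) →
      ∀ m : ι → ℝ, √(∑ k ∈ T, m k ^ 2) ≤ C * ‖∑ k ∈ T, m k • g k‖ := by
    intro T
    by_cases h : LinearIndepOn ℝ g (T : Set ι)
    · obtain ⟨C, hC, hbound⟩ := h.exists_sqrt_sum_sq_le
      exact ⟨C, hC, fun _ => hbound⟩
    · exact ⟨1, one_pos, fun h' => absurd h' h⟩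
  choose C hC hbound using hlocal
  obtain ⟨M, hM⟩ := Finite.exists_le C
  refine ⟨M, (hC ∅).trans_le (hM ∅), fun T hT m => (hbound T hT m).trans ?_⟩
  gcongr
  exact hM T

end InnerProduct

section Polyhedron

variable {V ι : Type*} [NormedAddCommGroup V] [InnerProductSpace ℝ V] (g : ι → V) (b : ι → ℝ)

def polyhedron : Set V := {y | ∀ k, ⟪g k, y⟫ ≤ b k}

noncomputable def activeSet [Fintype ι] (y : V) : Finset ι :=
  Finset.univ.filter fun k => ⟪g k, y⟫ = b k

theorem convex_polyhedron : Convex ℝ (polyhedron g b) := by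
  rw [polyhedron, Set.ofPred_forall]
  exact convex_iInter fun k => convex_halfSpace_le (innerₗ V (g k)).isLinear (b k)

theorem isClosed_polyhedron : IsClosed (polyhedron g b) := by
  rw [polyhedron, Set.ofPred_forall]
  exact isClosed_iInter fun k => isClosed_le (continuous_const.inner continuous_id) continuous_const

variable {g b}

theorem mem_activeSet [Fintype ι] {y : V} {k : ι} : k ∈ activeSet g b y ↔ ⟪g k, y⟫ = b k := by
  simp [activeSet]

theorem exists_pos_add_smul_mem_polyhedron [Finite ι] {y d : V} (hy : y ∈ polyhedron g b)
    (hd : ∀ k, ⟪g k, y⟫ = b k → ⟪g k, d⟫ ≤ 0) : ∃ t : ℝ, 0 < t ∧ y + t • d ∈ polyhedron g b := by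
  have hk : ∀ k, ∀ᶠ t in 𝓝[>] (0 : ℝ), ⟪g k, y + t • d⟫ ≤ b k := by
    intro k
    rcases (hy k).eq_or_lt with hact | hslack
    · filter_upwards [self_mem_nhdsWithin] with t (ht : 0 < t)
      rw [inner_add_right, real_inner_smul_right, hact]
      nlinarith [hd k hact]
    · have hlim : Tendsto (fun t : ℝ => ⟪g k, y + t • d⟫) (𝓝[>] 0) (𝓝 ⟪g k, y⟫) := by
        have hcont : Continuous fun t : ℝ => ⟪g k, y + t • d⟫ := by fun_prop
        simpa using (hcont.tendsto 0).mono_left nhdsWithin_le_nhds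
      exact (hlim.eventually_lt_const hslack).mono fun _ => le_of_lt
  obtain ⟨t, hmem, ht⟩ := ((Filter.eventually_all.mpr hk).and self_mem_nhdsWithin).exists
  exact ⟨t, ht, hmem⟩

/-- The normal cone of a polyhedron is generated by its active constraints. -/
theorem sub_mem_conicHull_activeSet [Fintype ι] [DecidableEq ι] [CompleteSpace V] {x y : V}
    (hy : y ∈ polyhedron g b) (hxy : ∀ w ∈ polyhedron g b, ⟪x - y, w - y⟫ ≤ 0) :
    x - y ∈ conicHull ℝ g (activeSet g b y) := by
  by_contra h
  obtain ⟨d, hd, hxd⟩ := exists_inner_pos_of_notMem_conicHull h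
  obtain ⟨t, ht, hmem⟩ :=
    exists_pos_add_smul_mem_polyhedron hy fun k hk => hd k (mem_activeSet.mpr hk)
  have := hxy _ hmem
  rw [add_sub_cancel_left, real_inner_smul_right] at this
  exact (mul_pos ht hxd).not_ge this

theorem norm_sub_le_of_mem_conicHull_activeSet [Fintype ι] {x y : V} {T : Finset ι} {C : ℝ}
    (hT : T ⊆ activeSet g b y) (hxy : x - y ∈ conicHull ℝ g T) (hC₀ : 0 ≤ C)
    (hC : ∀ m : ι → ℝ, √(∑ k ∈ T, m k ^ 2) ≤ C * ‖∑ k ∈ T, m k • g k‖) :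
    ‖x - y‖ ≤ C * √(∑ k, max (⟪g k, x⟫ - b k) 0 ^ 2) := by
  obtain ⟨m, hm, hsum⟩ := hxy
  set r := fun k => max (⟪g k, x⟫ - b k) 0
  have hres : ∀ k ∈ T, ⟪g k, x - y⟫ ≤ r k := fun k hk => by
    rw [inner_sub_right, mem_activeSet.mp (hT hk)]
    exact le_max_left _ _
  have hm_le : √(∑ k ∈ T, m k ^ 2) ≤ C * ‖x - y‖ := hsum ▸ hC m
  have key : ‖x - y‖ ^ 2 ≤ C * ‖x - y‖ * √(∑ k, r k ^ 2) := calc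
    ‖x - y‖ ^ 2 = ∑ k ∈ T, m k * ⟪g k, x - y⟫ := by
      rw [← real_inner_self_eq_norm_sq]
      nth_rw 1 [← hsum]
      simp only [sum_inner, real_inner_smul_left]
    _ ≤ ∑ k ∈ T, m k * r k :=
      Finset.sum_le_sum fun k hk => mul_le_mul_of_nonneg_left (hres k hk) (hm k hk)
    _ ≤ √(∑ k ∈ T, m k ^ 2) * √(∑ k ∈ T, r k ^ 2) := Real.sum_mul_le_sqrt_mul_sqrt _ _ _
    _ ≤ C * ‖x - y‖ * √(∑ k, r k ^ 2) :=
      mul_le_mul hm_le (Real.sqrt_le_sqrt (Finset.sum_le_univ_sum_of_nonneg fun _ => sq_nonneg _))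
        (Real.sqrt_nonneg _) ((Real.sqrt_nonneg _).trans hm_le)
  have : 0 ≤ C * √(∑ k, r k ^ 2) := by positivity
  nlinarith [norm_nonneg (x - y)]

theorem exists_forall_exists_mem_polyhedron_norm_sub_le [Fintype ι] [CompleteSpace V]
    (g : ι → V) :
    ∃ C > 0, ∀ b : ι → ℝ, (polyhedron g b).Nonempty → ∀ x, ∃ y ∈ polyhedron g b,
      ‖x - y‖ ≤ C * √(∑ k, max (⟪g k, x⟫ - b k) 0 ^ 2) := by
  classical
  obtain ⟨C, hC, hbound⟩ := exists_forall_linearIndepOn_sqrt_sum_sq_le g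
  refine ⟨C, hC, fun b hne x => ?_⟩
  obtain ⟨y, hy, hmin⟩ := exists_norm_eq_iInf_of_complete_convex hne
    (isClosed_polyhedron g b).isComplete (convex_polyhedron g b) x
  have hxy := (norm_eq_iInf_iff_real_inner_le_zero (convex_polyhedron g b) hy).mp hmin
  obtain ⟨T, hT, hTind, hxyT⟩ :=
    exists_linearIndepOn_of_mem_conicHull (sub_mem_conicHull_activeSet hy hxy)
  exact ⟨y, hy, norm_sub_le_of_mem_conicHull_activeSet hT hxyT hC.le (hbound T hTind)⟩

end Polyhedron

section LinearSystem

variable {V κ μ : Type*} [NormedAddCommGroup V] [InnerProductSpace ℝ V]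

theorem polyhedron_sumElim_neg (a : κ → V) (e : μ → V) (z : κ → ℝ) (s : μ → ℝ) :
    polyhedron (Sum.elim a (Sum.elim e (-e))) (Sum.elim z (Sum.elim s (-s))) =
      {y | (∀ i, ⟪a i, y⟫ ≤ z i) ∧ ∀ j, ⟪e j, y⟫ = s j} := by
  ext y
  simp [polyhedron, Sum.forall, inner_neg_left, le_antisymm_iff, forall_and]

theorem max_sq_add_max_neg_sq (t : ℝ) : max t 0 ^ 2 + max (-t) 0 ^ 2 = t ^ 2 := by
  rcases le_total t 0 with h | h <;> simp [h]

theorem sum_max_sq_sumElim_neg [Fintype κ] [Fintype μ] (a : κ → V) (e : μ → V) (z : κ → ℝ)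
    (s : μ → ℝ) (x : V) :
    ∑ k, max (⟪Sum.elim a (Sum.elim e (-e)) k, x⟫ - Sum.elim z (Sum.elim s (-s)) k) 0 ^ 2 =
      ∑ i, max (⟪a i, x⟫ - z i) 0 ^ 2 + ∑ j, (⟪e j, x⟫ - s j) ^ 2 := by
  simp only [Fintype.sum_sum_type, Sum.elim_inl, Sum.elim_inr, Pi.neg_apply, inner_neg_left,
    ← Finset.sum_add_distrib, ← max_sq_add_max_neg_sq (⟪e _, x⟫ - s _), neg_sub, sub_neg_eq_add,
    neg_add_eq_sub]

end LinearSystem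

theorem Matrix.toEuclideanLin_apply_eq_inner {m n : Type*} [Fintype n] [DecidableEq n]
    (A : Matrix m n ℝ) (x : EuclideanSpace ℝ n) (i : m) :
    Matrix.toEuclideanLin A x i = ⟪WithLp.toLp 2 (A i), x⟫ := by
  simp [Matrix.toLpLin_apply, Matrix.mulVec, dotProduct, PiLp.inner_apply, mul_comm]

theorem hoffman_bound_general
    (n p q : ℕ)
    (A : Matrix (Fin p) (Fin n) ℝ) (E : Matrix (Fin q) (Fin n) ℝ)
    (z : EuclideanSpace ℝ (Fin p)) (s : EuclideanSpace ℝ (Fin q))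
    (P : Set (EuclideanSpace ℝ (Fin n)))
    (hP : P = {x | (∀ i, Matrix.toEuclideanLin (𝕜 := ℝ) A x i ≤ z i) ∧
        Matrix.toEuclideanLin (𝕜 := ℝ) E x = s})
    (hPne : P.Nonempty) :
    ∃ θ : ℝ, 0 < θ ∧
      ∀ x : EuclideanSpace ℝ (Fin n),
        (∃ xstar ∈ P, ‖x - xstar‖ ≤
          θ * Real.sqrt ((∑ i, max (Matrix.toEuclideanLin (𝕜 := ℝ) A x i - z i) 0 ^ 2) +
            ‖Matrix.toEuclideanLin (𝕜 := ℝ) E x - s‖ ^ 2)) ∧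
        Metric.infDist x P ≤
          θ * Real.sqrt ((∑ i, max (Matrix.toEuclideanLin (𝕜 := ℝ) A x i - z i) 0 ^ 2) +
            ‖Matrix.toEuclideanLin (𝕜 := ℝ) E x - s‖ ^ 2) := by
  set a : Fin p → EuclideanSpace ℝ (Fin n) := fun i => WithLp.toLp 2 (A i)
  set e : Fin q → EuclideanSpace ℝ (Fin n) := fun j => WithLp.toLp 2 (E j)
  have hPg : P = polyhedron (Sum.elim a (Sum.elim e (-e))) (Sum.elim z (Sum.elim s (-s))) := by
    rw [polyhedron_sumElim_neg, hP]
    ext y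
    simp only [Set.mem_ofPred_eq, WithLp.ext_iff, funext_iff, Matrix.toEuclideanLin_apply_eq_inner]
    rfl
  obtain ⟨θ, hθ, hbound⟩ :=
    exists_forall_exists_mem_polyhedron_norm_sub_le (Sum.elim a (Sum.elim e (-e)))
  refine ⟨θ, hθ, fun x => ?_⟩
  obtain ⟨y, hy, hxy⟩ := hbound _ (hPg ▸ hPne) x
  rw [sum_max_sq_sumElim_neg] at hxy
  rw [EuclideanSpace.norm_sq_eq]
  simp only [Matrix.toEuclideanLin_apply_eq_inner, PiLp.sub_apply, Real.norm_eq_abs, sq_abs]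
  rw [← hPg] at hy
  exact ⟨⟨y, hy, hxy⟩, (Metric.infDist_le_dist_of_mem hy).trans (by rwa [dist_eq_norm])⟩

/-- Hoffman's bound: for a nonempty polyhedron
`P = {x : Ax ≤ z, Ex = s}` there is a constant `θ > 0`, depending only on `A` and `E`, such
that every `x` admits a point `x* ∈ P` with
`‖x − x*‖ ≤ θ ‖(max(Ax − z, 0), Ex − s)‖`; in particular
`dist(x, P) ≤ θ ‖(max(Ax − z, 0), Ex − s)‖`. -/
theorem hoffman_bound
    (n p q : ℕ) (hn : 0 < n) (hp : 0 < p) (hq : 0 < q)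
    (A : Matrix (Fin p) (Fin n) ℝ) (E : Matrix (Fin q) (Fin n) ℝ)
    (z : EuclideanSpace ℝ (Fin p)) (s : EuclideanSpace ℝ (Fin q))
    (P : Set (EuclideanSpace ℝ (Fin n)))
    (hP : P = {x | (∀ i, Matrix.toEuclideanLin (𝕜 := ℝ) A x i ≤ z i) ∧
        Matrix.toEuclideanLin (𝕜 := ℝ) E x = s})
    (hPne : P.Nonempty) :
    ∃ θ : ℝ, 0 < θ ∧
      ∀ x : EuclideanSpace ℝ (Fin n),
        (∃ xstar ∈ P, ‖x - xstar‖ ≤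
          θ * Real.sqrt ((∑ i, max (Matrix.toEuclideanLin (𝕜 := ℝ) A x i - z i) 0 ^ 2) +
            ‖Matrix.toEuclideanLin (𝕜 := ℝ) E x - s‖ ^ 2)) ∧
        Metric.infDist x P ≤
          θ * Real.sqrt ((∑ i, max (Matrix.toEuclideanLin (𝕜 := ℝ) A x i - z i) 0 ^ 2) +
            ‖Matrix.toEuclideanLin (𝕜 := ℝ) E x - s‖ ^ 2) :=
  hoffman_bound_general n p q A E z s P hP hPne
end

section
/- There exists a constant θ > 0, depending only on D, such that for every α ∈ B∞(λ), dist(α, Ω*) ≤ θ‖Dᵀα − s*‖, where s* is the common value of Dᵀα* over all α* ∈ Ω*. -/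
/-!
Once `Dᵀ` is known to be constant on the minimizers, `Ω*` is either empty or the polyhedron
`B∞(λ) ∩ {α | Dᵀα = s*}`, and the claim is Hoffman's error bound for it.

For a point `a` of a polyhedron `{x | ∀ i, g i x ≤ b i}`, let `y` be its projection onto the slice
`T x = s` and `A` the set of constraints active at `y`. Then `v = a - y` satisfies `g i v ≤ 0` on
`A`, and `⟪v, w⟫ ≤ 0` for every `w` with `T w = 0` and `g i w ≤ 0` on `A`, because `y + t w` stays in
the slice for small `t > 0`. These conditions cut out a closed cone meeting `ker T` only in `0`
(take `w = v`), so compactness of the unit sphere gives `‖v‖ ≤ θ ‖T v‖ = θ ‖T a - s‖`. There are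
finitely many active sets, and `θ` depends on neither `b` nor `s`.
-/

open scoped RealInnerProductSpace
open Matrix

open Filter Topology

theorem exists_norm_le_mul_norm_of_isClosed_of_smul_mem
    {E F : Type*} [NormedAddCommGroup E] [NormedSpace ℝ E] [FiniteDimensional ℝ E]
    [NormedAddCommGroup F] [NormedSpace ℝ F] (T : E →ₗ[ℝ] F) {S : Set E} (hS : IsClosed S)
    (hsmul : ∀ v ∈ S, ∀ t : ℝ, 0 < t → t • v ∈ S) (hker : ∀ v ∈ S, T v = 0 → v = 0) :
    ∃ θ > 0, ∀ v ∈ S, ‖v‖ ≤ θ * ‖T v‖ := by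
  have hK : IsCompact (S ∩ Metric.sphere 0 1) := (isCompact_sphere 0 1).inter_left hS
  have hT_ne : ∀ u ∈ S ∩ Metric.sphere 0 1, ‖T u‖ ≠ 0 := fun u hu h0 => by
    simpa [hker u hu.1 (norm_eq_zero.1 h0)] using hu.2
  obtain ⟨C, hC⟩ := hK.exists_bound_of_continuousOn (f := fun u => ‖T u‖⁻¹)
    (T.continuous_of_finiteDimensional.norm.continuousOn.inv₀ hT_ne)
  refine ⟨max C 1, by positivity, fun v hv => ?_⟩
  rcases eq_or_ne v 0 with rfl | hv0
  · simp
  have hvpos : 0 < ‖v‖ := norm_pos_iff.2 hv0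
  have hu : ‖v‖⁻¹ • v ∈ S ∩ Metric.sphere 0 1 :=
    ⟨hsmul v hv _ (inv_pos.2 hvpos), by simp [norm_smul, hvpos.ne']⟩
  have hTv : ‖T v‖ ≠ 0 := by simpa [norm_smul, hvpos.ne'] using hT_ne _ hu
  calc ‖v‖ = ‖T (‖v‖⁻¹ • v)‖⁻¹ * ‖T v‖ := by
        rw [map_smul, norm_smul, norm_inv, norm_norm]; field_simp
    _ ≤ C * ‖T v‖ := by gcongr; exact (le_abs_self _).trans (hC _ hu)
    _ ≤ max C 1 * ‖T v‖ := by gcongr; exact le_max_left _ _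

section Hoffman

variable {E F ι : Type*} [NormedAddCommGroup E] [InnerProductSpace ℝ E]
  [NormedAddCommGroup F] [NormedSpace ℝ F] (T : E →ₗ[ℝ] F) (g : ι → E →L[ℝ] ℝ)

def hoffmanCone (A : Set ι) : Set E :=
  {v | (∀ i ∈ A, g i v ≤ 0) ∧ ∀ w, T w = 0 → (∀ i ∈ A, g i w ≤ 0) → ⟪v, w⟫ ≤ 0}

theorem isClosed_hoffmanCone (A : Set ι) : IsClosed (hoffmanCone T g A) := by
  simp only [hoffmanCone, Set.ofPred_and, Set.ofPred_forall]
  refine .inter (isClosed_biInter fun i _ => isClosed_le (g i).continuous continuous_const)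
    (isClosed_iInter fun w => isClosed_iInter fun _ => isClosed_iInter fun _ =>
      isClosed_le (continuous_id.inner continuous_const) continuous_const)

theorem smul_mem_hoffmanCone {A : Set ι} {v : E} (hv : v ∈ hoffmanCone T g A) {t : ℝ}
    (ht : 0 < t) : t • v ∈ hoffmanCone T g A := by
  refine ⟨fun i hi => ?_, fun w hw hAw => ?_⟩
  · simpa using mul_nonpos_of_nonneg_of_nonpos ht.le (hv.1 i hi)
  · simpa [real_inner_smul_left] using mul_nonpos_of_nonneg_of_nonpos ht.le (hv.2 w hw hAw)

theorem eq_zero_of_mem_hoffmanCone {A : Set ι} {v : E} (hv : v ∈ hoffmanCone T g A)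
    (hTv : T v = 0) : v = 0 :=
  real_inner_self_nonpos.1 (hv.2 v hTv hv.1)

theorem sub_mem_hoffmanCone_of_inner_le_zero {b : ι → ℝ} {s : F} {a y : E}
    [Finite ι] (ha : ∀ i, g i a ≤ b i)
    (hy : y ∈ {x | ∀ i, g i x ≤ b i} ∩ T ⁻¹' {s})
    (hproj : ∀ z ∈ {x | ∀ i, g i x ≤ b i} ∩ T ⁻¹' {s}, ⟪a - y, z - y⟫ ≤ 0) :
    a - y ∈ hoffmanCone T g {i | g i y = b i} := by
  refine ⟨fun i (hi : g i y = b i) => by simpa [hi] using ha i, fun w hw hAw => ?_⟩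
  have hline : ∀ᶠ t in 𝓝[>] (0 : ℝ), ∀ i, g i (y + t • w) ≤ b i := by
    refine Filter.eventually_all.2 fun i => ?_
    rcases (hy.1 i).lt_or_eq with hlt | heq
    · have hcont : Continuous fun t : ℝ => g i (y + t • w) := by fun_prop
      exact nhdsWithin_le_nhds (hcont.tendsto' 0 _ (by simp) |>.eventually (gt_mem_nhds hlt)
        |>.mono fun _ => le_of_lt)
    · filter_upwards [self_mem_nhdsWithin] with t (ht : 0 < t)
      simpa [heq] using mul_nonpos_of_nonneg_of_nonpos ht.le (hAw i heq)
  obtain ⟨t, hyt, ht⟩ := (hline.and self_mem_nhdsWithin).exists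
  have := hproj (y + t • w) ⟨hyt, by simpa [hw] using hy.2⟩
  rw [add_sub_cancel_left, real_inner_smul_right] at this
  exact nonpos_of_mul_nonpos_right this ht

theorem exists_hoffman_constant [FiniteDimensional ℝ E] [Finite ι] :
    ∃ θ > 0, ∀ A : Set ι, ∀ v ∈ hoffmanCone T g A, ‖v‖ ≤ θ * ‖T v‖ := by
  obtain ⟨θ, hθ, hS⟩ := exists_norm_le_mul_norm_of_isClosed_of_smul_mem T
    (S := ⋃ A, hoffmanCone T g A) (isClosed_iUnion_of_finite (isClosed_hoffmanCone T g))
    (fun v hv t ht => Set.mem_iUnion.2 <|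
      (Set.mem_iUnion.1 hv).imp fun _ hA => smul_mem_hoffmanCone T g hA ht)
    (fun v hv => (Set.mem_iUnion.1 hv).elim fun _ hA => eq_zero_of_mem_hoffmanCone T g hA)
  exact ⟨θ, hθ, fun A v hv => hS v (Set.mem_iUnion.2 ⟨A, hv⟩)⟩

theorem exists_hoffman_bound [FiniteDimensional ℝ E] [Finite ι] :
    ∃ θ > 0, ∀ (b : ι → ℝ) (s : F), ∀ a ∈ {x | ∀ i, g i x ≤ b i},
      Metric.infDist a ({x | ∀ i, g i x ≤ b i} ∩ T ⁻¹' {s}) ≤ θ * ‖T a - s‖ := by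
  obtain ⟨θ, hθ, hcone⟩ := exists_hoffman_constant T g
  refine ⟨θ, hθ, fun b s a ha => ?_⟩
  set Ω := {x | ∀ i, g i x ≤ b i} ∩ T ⁻¹' {s}
  rcases Ω.eq_empty_or_nonempty with hΩ | hΩ
  · rw [hΩ, Metric.infDist_empty]; positivity
  have hconvex : Convex ℝ Ω := by
    refine .inter ?_ ((convex_singleton s).linear_preimage T)
    simp only [Set.ofPred_forall]
    exact convex_iInter fun i => convex_halfSpace_le (g i).isLinear (b i)
  have hclosed : IsClosed Ω := by
    refine .inter ?_ (isClosed_singleton.preimage T.continuous_of_finiteDimensional)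
    simp only [Set.ofPred_forall]
    exact isClosed_iInter fun i => isClosed_le (g i).continuous continuous_const
  obtain ⟨y, hy, hmin⟩ := exists_norm_eq_iInf_of_complete_convex hΩ hclosed.isComplete hconvex a
  have hproj := (norm_eq_iInf_iff_real_inner_le_zero hconvex hy).1 hmin
  calc Metric.infDist a Ω ≤ ‖a - y‖ := by simpa [dist_eq_norm] using Metric.infDist_le_dist_of_mem hy
    _ ≤ θ * ‖T (a - y)‖ := hcone _ _ (sub_mem_hoffmanCone_of_inner_le_zero T g ha hy hproj)
    _ = θ * ‖T a - s‖ := by rw [map_sub, hy.2]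

end Hoffman

theorem argmin_comp_eq_inter_preimage {α β γ : Type*} [LE γ] {B Ω : Set α} {T : α → β}
    {φ : β → γ} {s : β} (hΩ : Ω = {a | a ∈ B ∧ ∀ a' ∈ B, φ (T a) ≤ φ (T a')})
    (hs : ∀ a ∈ Ω, T a = s) (hne : Ω.Nonempty) : Ω = B ∩ T ⁻¹' {s} := by
  obtain ⟨b, hb⟩ := hne
  ext a
  constructor
  · intro ha
    exact ⟨(hΩ ▸ ha).1, hs a ha⟩
  · rintro ⟨haB, hTa : T a = s⟩
    rw [hΩ] at hb ⊢
    exact ⟨haB, by simpa only [hTa, ← hs b (hΩ ▸ hb)] using hb.2⟩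

noncomputable def boxConstraint (m : ℕ) : Fin m ⊕ Fin m → EuclideanSpace ℝ (Fin m) →L[ℝ] ℝ :=
  Sum.elim EuclideanSpace.proj fun i => -EuclideanSpace.proj i

theorem binfBall_eq_setOf_boxConstraint (m : ℕ) (lam : ℝ) :
    BinfBall m lam = {x | ∀ i, boxConstraint m i x ≤ lam} := by
  ext x
  simp [BinfBall, boxConstraint, abs_le, Sum.forall, forall_and, neg_le, and_comm]

theorem dual_distance_bound_general
    (d m : ℕ)
    (D : Matrix (Fin m) (Fin d) ℝ) (lam : ℝ)
    (fstar : EuclideanSpace ℝ (Fin d) → ℝ)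
    (fbar : EuclideanSpace ℝ (Fin m) → ℝ)
    (hfbar : ∀ a, fbar a = fstar (Matrix.toEuclideanLin (𝕜 := ℝ) Dᵀ a))
    (Ω : Set (EuclideanSpace ℝ (Fin m)))
    (hΩ : Ω = {a | a ∈ BinfBall m lam ∧ ∀ a' ∈ BinfBall m lam, fbar a ≤ fbar a'})
    (s : EuclideanSpace ℝ (Fin d))
    (hs : ∀ a ∈ Ω, Matrix.toEuclideanLin (𝕜 := ℝ) Dᵀ a = s) :
    ∃ θ : ℝ, 0 < θ ∧
      ∀ a ∈ BinfBall m lam,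
        Metric.infDist a Ω ≤ θ * ‖Matrix.toEuclideanLin (𝕜 := ℝ) Dᵀ a - s‖ := by
  obtain ⟨θ, hθ, hbound⟩ := exists_hoffman_bound (Matrix.toEuclideanLin (𝕜 := ℝ) Dᵀ) (boxConstraint m)
  refine ⟨θ, hθ, fun a ha => ?_⟩
  obtain rfl : fbar = fun a => fstar (Matrix.toEuclideanLin (𝕜 := ℝ) Dᵀ a) := funext hfbar
  rcases Ω.eq_empty_or_nonempty with hempty | hne
  · rw [hempty, Metric.infDist_empty]
    positivity
  rw [argmin_comp_eq_inter_preimage hΩ hs hne, binfBall_eq_setOf_boxConstraint]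
  rw [binfBall_eq_setOf_boxConstraint] at ha
  exact hbound (fun _ => lam) s a ha

/-- there exists `θ > 0`, depending only on `D`, such that for every
`α ∈ B∞(λ)`, `dist(α, Ω*) ≤ θ ‖Dᵀα − s*‖`, where `s*` is the common value of `Dᵀα*`
over `α* ∈ Ω*`. -/
theorem dual_distance_bound
    (d m : ℕ) (hd : 0 < d) (hm : 0 < m)
    (f : EuclideanSpace ℝ (Fin d) → ℝ)
    (f' : EuclideanSpace ℝ (Fin d) → EuclideanSpace ℝ (Fin d))
    (μ ℓ : ℝ) (hμ : 0 < μ) (hμℓ : μ ≤ ℓ)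
    (hconv : ConvexOn ℝ Set.univ f)
    (hgrad : ∀ x, HasGradientAt f (f' x) x)
    (hsc : ∀ β₁ β₂ : EuclideanSpace ℝ (Fin d),
      μ * ‖β₁ - β₂‖ ^ 2 ≤ ⟪f' β₁ - f' β₂, β₁ - β₂⟫)
    (hlip : ∀ β₁ β₂ : EuclideanSpace ℝ (Fin d),
      ‖f' β₁ - f' β₂‖ ≤ ℓ * ‖β₁ - β₂‖)
    (D : Matrix (Fin m) (Fin d) ℝ) (lam : ℝ) (hlam : 0 < lam)
    (fstar : EuclideanSpace ℝ (Fin d) → ℝ)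
    (hfstar : ∀ x, IsLUB (Set.range fun β => ⟪x, β⟫ - f β) (fstar x))
    (fbar : EuclideanSpace ℝ (Fin m) → ℝ)
    (hfbar : ∀ a, fbar a = fstar (Matrix.toEuclideanLin (𝕜 := ℝ) Dᵀ a))
    (Ω : Set (EuclideanSpace ℝ (Fin m)))
    (hΩ : Ω = {a | a ∈ BinfBall m lam ∧ ∀ a' ∈ BinfBall m lam, fbar a ≤ fbar a'})
    (s : EuclideanSpace ℝ (Fin d))
    (hs : ∀ a ∈ Ω, Matrix.toEuclideanLin (𝕜 := ℝ) Dᵀ a = s) :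
    ∃ θ : ℝ, 0 < θ ∧
      ∀ a ∈ BinfBall m lam,
        Metric.infDist a Ω ≤ θ * ‖Matrix.toEuclideanLin (𝕜 := ℝ) Dᵀ a - s‖ :=
  dual_distance_bound_general d m D lam fstar fbar hfbar Ω hΩ s hs
end

section
/- For all α₁, α₂ ∈ ℝ^m, (∇g(α₁) − ∇g(α₂))ᵀ(α₁ − α₂) ≤ (1 + L)‖G(α₁) − G(α₂)‖ · ‖α₁ − α₂‖, where G(α) = α − proj_C(α − ∇g(α)) is the projected-gradient mapping. -/
open scoped RealInnerProductSpace

/-- `p` is the Euclidean projection of `x` onto `C`. -/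
def IsProjOn {E : Type*} [NormedAddCommGroup E] (C : Set E) (x p : E) : Prop :=
  p ∈ C ∧ ∀ q ∈ C, ‖x - p‖ ≤ ‖x - q‖

/-- for a differentiable convex `g : ℝ^m → ℝ` with `L`-Lipschitz gradient and a
nonempty closed convex `C`, the projected-gradient mapping `G(α) = α − proj_C(α − ∇g(α))`
satisfies `(∇g(α₁) − ∇g(α₂))ᵀ(α₁ − α₂) ≤ (1 + L) ‖G(α₁) − G(α₂)‖ ‖α₁ − α₂‖`. -/
theorem projected_gradient_mapping_bound
    (m : ℕ) (hm : 0 < m)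
    (C : Set (EuclideanSpace ℝ (Fin m)))
    (hCne : C.Nonempty) (hCcl : IsClosed C) (hCcv : Convex ℝ C)
    (g : EuclideanSpace ℝ (Fin m) → ℝ)
    (g' : EuclideanSpace ℝ (Fin m) → EuclideanSpace ℝ (Fin m))
    (L : ℝ) (hL : 0 < L)
    (hconv : ConvexOn ℝ Set.univ g)
    (hgrad : ∀ x, HasGradientAt g (g' x) x)
    (hlip : ∀ x y, ‖g' x - g' y‖ ≤ L * ‖x - y‖)
    (P : EuclideanSpace ℝ (Fin m) → EuclideanSpace ℝ (Fin m))
    (hP : ∀ x, IsProjOn C x (P x)) :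
    ∀ α₁ α₂ : EuclideanSpace ℝ (Fin m),
      ⟪g' α₁ - g' α₂, α₁ - α₂⟫ ≤
        (1 + L) * ‖(α₁ - P (α₁ - g' α₁)) - (α₂ - P (α₂ - g' α₂))‖ * ‖α₁ - α₂‖ := by
  -- variational inequality for the projection
  have hVI : ∀ x, ∀ q ∈ C, ⟪x - P x, q - P x⟫ ≤ 0 := by
    intro x q hq
    obtain ⟨hPx, hmin⟩ := hP x
    haveI : Nonempty C := ⟨⟨P x, hPx⟩⟩
    have hinf : ‖x - P x‖ = ⨅ w : C, ‖x - (w : EuclideanSpace ℝ (Fin m))‖ := by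
      apply le_antisymm
      · exact le_ciInf fun w => hmin w w.2
      · exact ciInf_le ⟨0, by rintro r ⟨w, rfl⟩; exact norm_nonneg _⟩ (⟨P x, hPx⟩ : C)
    exact ((norm_eq_iInf_iff_real_inner_le_zero hCcv hPx).1 hinf) q hq
  intro α₁ α₂
  set p₁ := P (α₁ - g' α₁) with hp₁
  set p₂ := P (α₂ - g' α₂) with hp₂
  set a := α₁ - α₂ with ha
  set d := g' α₁ - g' α₂ with hd
  set p := p₁ - p₂ with hpp
  set G := a - p with hG
  have h1 := hVI (α₁ - g' α₁) p₂ (hP (α₂ - g' α₂)).1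
  have h2 := hVI (α₂ - g' α₂) p₁ (hP (α₁ - g' α₁)).1
  rw [← hp₂] at h2
  -- firm nonexpansiveness-type inequality
  have s1 : 0 ≤ ⟪(α₁ - g' α₁) - p₁, p⟫ := by
    have e : p = -(p₂ - p₁) := by rw [hpp]; abel
    rw [e, inner_neg_right]
    linarith
  have s2 : ⟪(α₂ - g' α₂) - p₂, p⟫ ≤ 0 := by rw [hpp]; exact h2
  have key : ⟪p, p⟫ ≤ ⟪a - d, p⟫ := by
    have e : (a - d) - p = ((α₁ - g' α₁) - p₁) - ((α₂ - g' α₂) - p₂) := by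
      rw [ha, hd, hpp]; abel
    have h0 : 0 ≤ ⟪(a - d) - p, p⟫ := by
      rw [e, inner_sub_left]; linarith
    rw [inner_sub_left] at h0; linarith
  have egoal : (α₁ - p₁) - (α₂ - p₂) = G := by rw [hG, ha, hpp]; abel
  rw [egoal]
  have E1 : ⟪d, a⟫ = ⟪d, G⟫ + ⟪d, p⟫ := by
    have e : a = G + p := by rw [hG]; abel
    rw [e, inner_add_right]
  have E2 : ⟪a - d, p⟫ = ⟪a, p⟫ - ⟪d, p⟫ := inner_sub_left _ _ _
  have E3 : ⟪G, p⟫ = ⟪a, p⟫ - ⟪p, p⟫ := by rw [hG, inner_sub_left]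
  have E4 : ⟪G, a⟫ = ⟪G, G⟫ + ⟪G, p⟫ := by
    have e : a = G + p := by rw [hG]; abel
    rw [e, inner_add_right]
  have hGa : ⟪G, a⟫ ≤ ‖G‖ * ‖a‖ := real_inner_le_norm G a
  have hdG : ⟪d, G⟫ ≤ ‖d‖ * ‖G‖ := real_inner_le_norm d G
  have hd' : ‖d‖ ≤ L * ‖a‖ := hlip α₁ α₂
  have hGn : (0 : ℝ) ≤ ‖G‖ := norm_nonneg _
  have hGG : (0 : ℝ) ≤ ⟪G, G⟫ := real_inner_self_nonneg
  have hmul : ‖d‖ * ‖G‖ ≤ L * ‖a‖ * ‖G‖ := mul_le_mul_of_nonneg_right hd' hGn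
  linarith
end
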